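/- arXiv:1001.4010 — 4 statements merged into one kernel-verified Lean document; each statement's English description precedes it below -/
import Mathlib

section
/- Let R, S be 2d×2d complex matrices with rank(R,S) = 2d. If S R* = R S*, then a pair of vectors (α, β) ∈ ℂ^{2d} × ℂ^{2d} satisfies Rα + Sβ = 0 if and only if there exists a unique η ∈ ℂ^{2d} with α = -S* η and β = R* η. -/
open Matrix

open scoped ComplexOrder in
lemma rank_self_mul_conjTranspose_complex {m n : Type*} [Fintype m] [Fintype n]
    [DecidableEq m] [DecidableEq n] (A : Matrix m n ℂ) : (A * Aᴴ).rank = A.rank :=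
  Matrix.rank_self_mul_conjTranspose A

lemma isUnit_of_rank_eq_card {n : ℕ} (A : Matrix (Fin n) (Fin n) ℂ) (h : A.rank = n) :
    IsUnit A := by
  rw [← Matrix.mulVec_surjective_iff_isUnit]
  have hr : LinearMap.range A.mulVecLin = ⊤ := by
    apply Submodule.eq_top_of_finrank_eq
    rw [Matrix.rank] at h
    simpa [Module.finrank_pi] using h
  intro y
  have : y ∈ LinearMap.range A.mulVecLin := by rw [hr]; trivial
  obtain ⟨x, hx⟩ := this
  exact ⟨x, hx⟩

/-- Parametrization of self-adjoint boundary conditions: with `rank (R,S) = 2d` and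
`S R* = R S*`, a pair `(α, β)` satisfies `Rα + Sβ = 0` iff there is a unique `η`
with `α = -S* η` and `β = R* η`. -/
theorem boundary_condition_parametrization (d : ℕ)
    (R S : Matrix (Fin (2 * d)) (Fin (2 * d)) ℂ)
    (hrank : (Matrix.fromCols R S).rank = 2 * d)
    (hRS : S * Rᴴ = R * Sᴴ)
    (α β : Fin (2 * d) → ℂ) :
    R *ᵥ α + S *ᵥ β = 0 ↔
      ∃! η : Fin (2 * d) → ℂ, α = -(Sᴴ *ᵥ η) ∧ β = Rᴴ *ᵥ η := by
  classical
  obtain ⟨T, hT⟩ : ∃ T : Matrix (Fin (2 * d)) (Fin (2 * d)) ℂ, T = R * Rᴴ + S * Sᴴ := ⟨_, rfl⟩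
  have hTunit : IsUnit T := by
    apply isUnit_of_rank_eq_card
    have h1 : (fromCols R S * (fromCols R S)ᴴ).rank = (fromCols R S).rank :=
      rank_self_mul_conjTranspose_complex _
    have h2 : fromCols R S * (fromCols R S)ᴴ = T := by
      rw [conjTranspose_fromCols_eq_fromRows_conjTranspose, fromCols_mul_fromRows, hT]
    rw [h2] at h1
    rw [h1, hrank]
  obtain ⟨A, hA⟩ : ∃ A : Matrix (Fin (2 * d)) (Fin (2 * d)) ℂ, A = R + Complex.I • S := ⟨_, rfl⟩
  obtain ⟨B, hB⟩ : ∃ B : Matrix (Fin (2 * d)) (Fin (2 * d)) ℂ, B = R - Complex.I • S := ⟨_, rfl⟩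
  have hAconj : Aᴴ = Rᴴ - Complex.I • Sᴴ := by
    simp [hA, conjTranspose_smul, Complex.star_def, Complex.conj_I, neg_smul, sub_eq_add_neg]
  have hBconj : Bᴴ = Rᴴ + Complex.I • Sᴴ := by
    simp [hB, conjTranspose_smul, Complex.star_def, Complex.conj_I, sub_eq_add_neg, neg_smul]
  have key : Complex.I • S * (Complex.I • Sᴴ) = -(S * Sᴴ) := by
    simp [Matrix.smul_mul, Matrix.mul_smul, smul_smul, Complex.I_mul_I]
  have h2 : Complex.I • S * Rᴴ = Complex.I • (R * Sᴴ) := by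
    rw [Matrix.smul_mul, hRS]
  have h3 : R * (Complex.I • Sᴴ) = Complex.I • (R * Sᴴ) := by
    rw [Matrix.mul_smul]
  have hAT : A * Aᴴ = T := by
    rw [hAconj, hA, hT, add_mul, mul_sub, mul_sub, key, h2, h3]
    noncomm_ring
  have hBT : B * Bᴴ = T := by
    rw [hBconj, hB, hT, sub_mul, mul_add, mul_add, key, h2, h3]
    noncomm_ring
  have hTdet : IsUnit T.det := (Matrix.isUnit_iff_isUnit_det T).mp hTunit
  have hAunit : IsUnit A := by
    have : IsUnit (A.det * Aᴴ.det) := by rw [← Matrix.det_mul, hAT]; exact hTdet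
    exact (Matrix.isUnit_iff_isUnit_det A).mpr (isUnit_of_mul_isUnit_left this)
  have hBunit : IsUnit B := by
    have : IsUnit (B.det * Bᴴ.det) := by rw [← Matrix.det_mul, hBT]; exact hTdet
    exact (Matrix.isUnit_iff_isUnit_det B).mpr (isUnit_of_mul_isUnit_left this)
  have hAHunit : IsUnit Aᴴ := by
    rw [Matrix.isUnit_iff_isUnit_det, Matrix.det_conjTranspose]
    exact ((Matrix.isUnit_iff_isUnit_det A).mp hAunit).map (starRingEnd ℂ)
  constructor
  · intro h
    obtain ⟨η, hη⟩ : ∃ η : Fin (2 * d) → ℂ, η = T⁻¹ *ᵥ (R *ᵥ β - S *ᵥ α) := ⟨_, rfl⟩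
    have hTη : T *ᵥ η = R *ᵥ β - S *ᵥ α := by
      rw [hη, Matrix.mulVec_mulVec, Matrix.mul_nonsing_inv _ hTdet, Matrix.one_mulVec]
    obtain ⟨u, hu⟩ : ∃ u : Fin (2 * d) → ℂ, u = α + Sᴴ *ᵥ η := ⟨_, rfl⟩
    obtain ⟨v, hv⟩ : ∃ v : Fin (2 * d) → ℂ, v = β - Rᴴ *ᵥ η := ⟨_, rfl⟩
    have e1 : R *ᵥ u + S *ᵥ v = 0 := by
      rw [hu, hv, Matrix.mulVec_add, Matrix.mulVec_sub, Matrix.mulVec_mulVec,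
        Matrix.mulVec_mulVec]
      have hz : (R * Sᴴ) *ᵥ η - (S * Rᴴ) *ᵥ η = 0 := by rw [hRS]; simp
      calc R *ᵥ α + (R * Sᴴ) *ᵥ η + (S *ᵥ β - (S * Rᴴ) *ᵥ η)
          = (R *ᵥ α + S *ᵥ β) + ((R * Sᴴ) *ᵥ η - (S * Rᴴ) *ᵥ η) := by abel
        _ = 0 := by rw [h, hz]; simp
    have e2 : R *ᵥ v - S *ᵥ u = 0 := by
      rw [hu, hv, Matrix.mulVec_add, Matrix.mulVec_sub, Matrix.mulVec_mulVec,
        Matrix.mulVec_mulVec]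
      have hTη' : (R * Rᴴ) *ᵥ η + (S * Sᴴ) *ᵥ η = R *ᵥ β - S *ᵥ α := by
        rw [← Matrix.add_mulVec, ← hT, hTη]
      calc R *ᵥ β - (R * Rᴴ) *ᵥ η - (S *ᵥ α + (S * Sᴴ) *ᵥ η)
          = (R *ᵥ β - S *ᵥ α) - ((R * Rᴴ) *ᵥ η + (S * Sᴴ) *ᵥ η) := by abel
        _ = 0 := by rw [hTη']; simp
    have hRu : R *ᵥ u = -(S *ᵥ v) := eq_neg_of_add_eq_zero_left e1
    have hRv : R *ᵥ v = S *ᵥ u := sub_eq_zero.mp e2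
    have hBzero : B *ᵥ (u + Complex.I • v) = 0 := by
      rw [hB, Matrix.sub_mulVec, Matrix.mulVec_add, Matrix.mulVec_add,
        Matrix.mulVec_smul, Matrix.mulVec_smul, Matrix.smul_mulVec,
        Matrix.smul_mulVec, hRu, hRv, smul_smul, Complex.I_mul_I]
      module
    have hAzero : A *ᵥ (u - Complex.I • v) = 0 := by
      rw [hA, Matrix.add_mulVec, Matrix.mulVec_sub, Matrix.mulVec_sub,
        Matrix.mulVec_smul, Matrix.mulVec_smul, Matrix.smul_mulVec,
        Matrix.smul_mulVec, hRu, hRv, smul_smul, Complex.I_mul_I]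
      module
    have hBinj := Matrix.mulVec_injective_iff_isUnit.mpr hBunit
    have hAinj := Matrix.mulVec_injective_iff_isUnit.mpr hAunit
    have h1 : u + Complex.I • v = 0 := by
      apply hBinj; rw [hBzero, Matrix.mulVec_zero]
    have h2 : u - Complex.I • v = 0 := by
      apply hAinj; rw [hAzero, Matrix.mulVec_zero]
    have huu : u + u = 0 := by
      have : (u + Complex.I • v) + (u - Complex.I • v) = 0 := by rw [h1, h2, add_zero]
      calc u + u = (u + Complex.I • v) + (u - Complex.I • v) := by abel
        _ = 0 := this
    have hu0 : u = 0 := by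
      have h2u : (2 : ℂ) • u = 0 := by rw [two_smul]; exact huu
      exact (smul_eq_zero.mp h2u).resolve_left two_ne_zero
    have hv0 : v = 0 := by
      have hIv : Complex.I • v = 0 := by
        have := h1; rw [hu0, zero_add] at this; exact this
      exact (smul_eq_zero.mp hIv).resolve_left Complex.I_ne_zero
    have hαη : α = -(Sᴴ *ᵥ η) := by
      rw [hu] at hu0; exact eq_neg_of_add_eq_zero_left hu0
    have hβη : β = Rᴴ *ᵥ η := by
      rw [hv] at hv0; exact sub_eq_zero.mp hv0
    refine ⟨η, ⟨hαη, hβη⟩, ?_⟩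
    rintro η' ⟨hα', hβ'⟩
    have hS : Sᴴ *ᵥ η' = Sᴴ *ᵥ η := neg_injective (hα'.symm.trans hαη)
    have hR : Rᴴ *ᵥ η' = Rᴴ *ᵥ η := hβ'.symm.trans hβη
    have hAH : Aᴴ *ᵥ η' = Aᴴ *ᵥ η := by
      rw [hAconj, Matrix.sub_mulVec, Matrix.sub_mulVec,
        Matrix.smul_mulVec, Matrix.smul_mulVec, hS, hR]
    exact Matrix.mulVec_injective_iff_isUnit.mpr hAHunit hAH
  · rintro ⟨η, ⟨hα', hβ'⟩, -⟩
    rw [hα', hβ', Matrix.mulVec_neg, Matrix.mulVec_mulVec, Matrix.mulVec_mulVec, ← hRS]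
    simp
end

section
/- Let A, B, C be n×n complex matrices with B and C Hermitian and I - μ A* invertible for a real number μ > 0. Define the 2n×2n matrix S = [[A - μ B (I - μA*)⁻¹ C, B (I - μA*)⁻¹], [(I - μA*)⁻¹ C, -(I - μA*)⁻¹ A*]]. Then S is symplectic with respect to the time scale, i.e., S* J + J S = μ S* J S, where J = [[0, I], [-I, 0]]. -/
open Matrix

/-- The matrix `S = (I + μ H M* M)⁻¹ H` written out in blocks is symplectic with
respect to the time scale: `S* J + J S = μ S* J S`. -/
theorem S_is_symplectic (n : ℕ) (μ : ℝ) (hμ : 0 < μ)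
    (A B C : Matrix (Fin n) (Fin n) ℂ)
    (hB : B.IsHermitian) (hC : C.IsHermitian)
    (hA : IsUnit (1 - (μ : ℂ) • Aᴴ)) :
    let G : Matrix (Fin n) (Fin n) ℂ := (1 - (μ : ℂ) • Aᴴ)⁻¹
    let S : Matrix (Fin n ⊕ Fin n) (Fin n ⊕ Fin n) ℂ :=
      Matrix.fromBlocks (A - (μ : ℂ) • (B * G * C)) (B * G) (G * C) (-(G * Aᴴ))
    let J : Matrix (Fin n ⊕ Fin n) (Fin n ⊕ Fin n) ℂ :=
      Matrix.fromBlocks 0 1 (-1) 0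
    Sᴴ * J + J * S = (μ : ℂ) • (Sᴴ * J * S) := by
  intro G S J
  set m : ℂ := (μ : ℂ) with hm_def
  have hm : m ≠ 0 := by
    simp [hm_def, Complex.ofReal_eq_zero]
    exact ne_of_gt hμ
  have hms : star m = m := by simp [hm_def]
  have hdet : IsUnit (1 - m • Aᴴ).det := (Matrix.isUnit_iff_isUnit_det _).mp hA
  have h1 : G * (1 - m • Aᴴ) = 1 := Matrix.nonsing_inv_mul _ hdet
  have h2 : (1 - m • Aᴴ) * G = 1 := Matrix.mul_nonsing_inv _ hdet
  have h3 : Gᴴ * (1 - m • A) = 1 := by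
    have := congrArg conjTranspose h2
    simpa [Matrix.conjTranspose_mul, Matrix.conjTranspose_sub, hms] using this
  have h4 : (1 - m • A) * Gᴴ = 1 := by
    have := congrArg conjTranspose h1
    simpa [Matrix.conjTranspose_mul, Matrix.conjTranspose_sub, hms] using this
  -- expanded versions
  have e1 : G - m • (G * Aᴴ) = 1 := by
    simpa [Matrix.mul_sub, Matrix.mul_smul] using h1
  have e2 : G - m • (Aᴴ * G) = 1 := by
    simpa [Matrix.sub_mul, Matrix.smul_mul] using h2
  have e3 : Gᴴ - m • (Gᴴ * A) = 1 := by
    simpa [Matrix.mul_sub, Matrix.mul_smul] using h3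
  have e4 : Gᴴ - m • (A * Gᴴ) = 1 := by
    simpa [Matrix.sub_mul, Matrix.smul_mul] using h4
  -- the key fact: 1 - m • S is symplectic
  have key : (1 - m • S)ᴴ * J * (1 - m • S) = J := by
    have hK : (1 : Matrix (Fin n ⊕ Fin n) (Fin n ⊕ Fin n) ℂ) - m • S =
        Matrix.fromBlocks (1 - m • A + (m * m) • (B * G * C)) (-(m • (B * G)))
          (-(m • (G * C))) G := by
      show (1 : Matrix (Fin n ⊕ Fin n) (Fin n ⊕ Fin n) ℂ)
          - m • Matrix.fromBlocks (A - m • (B * G * C)) (B * G) (G * C) (-(G * Aᴴ)) = _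
      rw [← Matrix.fromBlocks_one, Matrix.fromBlocks_smul, sub_eq_add_neg,
        Matrix.fromBlocks_neg, Matrix.fromBlocks_add, Matrix.fromBlocks_inj]
      refine ⟨?_, by simp, by simp, ?_⟩
      · rw [smul_sub, smul_smul]; abel
      · rw [smul_neg, neg_neg, ← e1]; abel
    rw [hK, Matrix.fromBlocks_conjTranspose]
    show _ = Matrix.fromBlocks 0 1 (-1) 0
    rw [Matrix.fromBlocks_multiply, Matrix.fromBlocks_multiply, Matrix.fromBlocks_inj]
    have hPH : (1 - m • A + (m * m) • (B * G * C))ᴴ =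
        1 - m • Aᴴ + (m * m) • (C * Gᴴ * B) := by
      simp [Matrix.conjTranspose_sub, Matrix.conjTranspose_add, Matrix.conjTranspose_mul,
        hms, hB.eq, hC.eq, mul_assoc]
    have h12 : (1 - m • A + (m * m) • (B * G * C))ᴴ * G = 1 + (m * m) • (C * Gᴴ * B * G) := by
      rw [hPH, Matrix.add_mul, Matrix.sub_mul, Matrix.smul_mul, Matrix.smul_mul, one_mul, ← e2]
      try abel
    have h21 : Gᴴ * (1 - m • A + (m * m) • (B * G * C)) =
        1 + (m * m) • (Gᴴ * (B * G * C)) := by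
      rw [Matrix.mul_add, Matrix.mul_sub, Matrix.mul_smul, Matrix.mul_smul, mul_one, ← e3]
      try abel
    refine ⟨?_, ?_, ?_, ?_⟩ <;>
      simp only [Matrix.mul_zero, Matrix.mul_one, Matrix.zero_mul, Matrix.one_mul,
        zero_add, add_zero, Matrix.conjTranspose_neg, Matrix.conjTranspose_smul, hms,
        Matrix.conjTranspose_mul, hB.eq, hC.eq, Matrix.conjTranspose_conjTranspose,
        Matrix.neg_mul, Matrix.mul_neg, neg_neg, Matrix.smul_mul, Matrix.mul_smul,
        smul_smul]
    · rw [show C * Gᴴ * (1 - m • A + (m * m) • (B * G * C))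
            = C * (Gᴴ * (1 - m • A + (m * m) • (B * G * C))) from mul_assoc _ _ _,
        h21,
        show (1 - m • A + (m * m) • (B * G * C))ᴴ * (G * C)
            = ((1 - m • A + (m * m) • (B * G * C))ᴴ * G) * C from (mul_assoc _ _ _).symm,
        h12]
      simp only [Matrix.mul_add, Matrix.add_mul, Matrix.mul_one, Matrix.one_mul,
        Matrix.mul_smul, Matrix.smul_mul, smul_add, mul_assoc]
      abel
    · rw [h12, show C * Gᴴ * (B * G) = C * Gᴴ * B * G from (mul_assoc _ _ _).symm]
      abel
    · rw [h21, smul_neg, neg_neg, smul_smul,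
        show Gᴴ * B * (G * C) = Gᴴ * (B * G * C) from by simp only [mul_assoc]]
      abel
    · rw [smul_neg, neg_neg, show Gᴴ * (B * G) = Gᴴ * B * G from (mul_assoc _ _ _).symm]
      abel
  -- derive the goal from key
  have expand : (1 - m • S)ᴴ * J * (1 - m • S)
      = J - m • (Sᴴ * J + J * S - m • (Sᴴ * J * S)) := by
    rw [Matrix.conjTranspose_sub, Matrix.conjTranspose_smul, hms, Matrix.conjTranspose_one]
    simp only [Matrix.sub_mul, Matrix.mul_sub, Matrix.smul_mul, Matrix.mul_smul,
      one_mul, mul_one, smul_sub, smul_add, smul_smul]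
    abel
  rw [expand] at key
  have h0 : m • (Sᴴ * J + J * S - m • (Sᴴ * J * S)) = 0 := by
    have := sub_eq_zero.mpr key
    rw [sub_sub_cancel_left] at this
    simpa using this
  rcases smul_eq_zero.mp h0 with h | h
  · exact absurd h hm
  · exact sub_eq_zero.mp h
end

section
/- Let H be a 2n×2n Hamiltonian matrix (H* J + J H = 0, with J = [[0,I],[-I,0]]) and μ > 0 real such that I + μ H M* M is invertible, where M = [[0,I],[0,0]]. If a function z on grid index n satisfies the linear Hamiltonian nabla system z^∇ = H (M* M z^ρ + M M* z) (where z^ρ(n) = z(n-1), z^∇(n) = (z(n)-z(n-1))/μ), then z also satisfies the symplectic system z^∇ = S z with S = (I + μ H M* M)⁻¹ H. -/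
open Matrix

/-- Every solution of the linear Hamiltonian nabla system
`z^∇ = H (M* M z^ρ + M M* z)` also solves the symplectic system `z^∇ = S z`
with `S = (I + μ H M* M)⁻¹ H`. -/
theorem hamiltonian_to_symplectic (n : ℕ) (μ : ℝ) (hμ : 0 < μ)
    (H : Matrix (Fin n ⊕ Fin n) (Fin n ⊕ Fin n) ℂ)
    (hHam : Hᴴ * (Matrix.fromBlocks 0 1 (-1) 0) +
        (Matrix.fromBlocks 0 1 (-1) 0 : Matrix (Fin n ⊕ Fin n) (Fin n ⊕ Fin n) ℂ) * H = 0)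
    (z : ℤ → (Fin n ⊕ Fin n → ℂ)) :
    let M : Matrix (Fin n ⊕ Fin n) (Fin n ⊕ Fin n) ℂ := Matrix.fromBlocks 0 1 0 0
    let nabz : ℤ → (Fin n ⊕ Fin n → ℂ) := fun k => ((μ : ℂ))⁻¹ • (z k - z (k - 1))
    IsUnit (1 + (μ : ℂ) • (H * Mᴴ * M)) →
    (∀ k : ℤ, nabz k = H *ᵥ ((Mᴴ * M) *ᵥ z (k - 1) + (M * Mᴴ) *ᵥ z k)) →
    ∀ k : ℤ, nabz k = ((1 + (μ : ℂ) • (H * Mᴴ * M))⁻¹ * H) *ᵥ z k := by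
  intro M nabz hA hsys k
  have hμ' : (μ : ℂ) ≠ 0 := by
    exact_mod_cast Complex.ofReal_ne_zero.mpr (ne_of_gt hμ)
  set A : Matrix (Fin n ⊕ Fin n) (Fin n ⊕ Fin n) ℂ :=
    1 + (μ : ℂ) • (H * Mᴴ * M) with hAdef
  -- z (k-1) in terms of nabz
  have hz : z (k - 1) = z k - (μ : ℂ) • nabz k := by
    simp only [nabz, smul_smul, mul_inv_cancel₀ hμ', one_smul]
    abel
  -- M* M + M M* = 1
  have hMM : Mᴴ * M + M * Mᴴ = 1 := by
    simp only [M, fromBlocks_conjTranspose, conjTranspose_zero, conjTranspose_one,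
      fromBlocks_multiply, fromBlocks_add]
    simp [← fromBlocks_one]
  -- A *ᵥ nabz k = H *ᵥ z k
  have key : A *ᵥ nabz k = H *ᵥ z k := by
    have h1 := hsys k
    rw [hz] at h1
    have h2 : (Mᴴ * M) *ᵥ (z k - (μ : ℂ) • nabz k) + (M * Mᴴ) *ᵥ z k
        = (Mᴴ * M + M * Mᴴ) *ᵥ z k - (μ : ℂ) • ((Mᴴ * M) *ᵥ nabz k) := by
      rw [add_mulVec, mulVec_sub, mulVec_smul]
      abel
    rw [h2, hMM, one_mulVec] at h1
    rw [hAdef, add_mulVec, smul_mulVec, one_mulVec, ← mulVec_mulVec, ← mulVec_mulVec]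
    rw [mulVec_sub, mulVec_smul, ← mulVec_mulVec, eq_sub_iff_add_eq] at h1
    exact h1
  have hAinv : A⁻¹ * A = 1 := nonsing_inv_mul A (isUnit_iff_isUnit_det A |>.mp hA)
  calc nabz k = (A⁻¹ * A) *ᵥ nabz k := by rw [hAinv, one_mulVec]
    _ = A⁻¹ *ᵥ (A *ᵥ nabz k) := by rw [← mulVec_mulVec]
    _ = A⁻¹ *ᵥ (H *ᵥ z k) := by rw [key]
    _ = (A⁻¹ * H) *ᵥ z k := by rw [mulVec_mulVec]
end

section
/- Lagrange identity for Hamiltonian nabla systems (discrete version): Let A(n), B(n), C(n) be d×d complex matrices with B(n), C(n) Hermitian for each n, and define for pairs of sequences (x,u) the operator ℓ(x,u)(n) = J·(x^∇(n); u^∇(n)) - H(n)·(x(n); u^ρ(n)), where H(n) = [[-C(n), A*(n)], [A(n), B(n)]] and J = [[0, -I], [I, 0]]. Then for all pairs (x,u), (y,v): ∑_{n} { (y*(n), v^ρ*(n))·ℓ(x,u)(n) - ℓ(y,v)*(n)·(x(n); u^ρ(n)) }·μρ(n) = [ (y*(N-1), v*(N-1)) J (x(N-1); u(N-1)) ] -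 [ (y*(-1), v*(-1)) J (x(-1); u(-1)) ], i.e., the summand equals the nabla derivative of (v* x - y* u). -/
open Matrix

lemma star_sum_elim {d : ℕ} (a b : Fin d → ℂ) :
    star (Sum.elim a b) = Sum.elim (star a) (star b) := by
  funext i; cases i <;> rfl

lemma dot_smul' {d : ℕ} (c : ℂ) (a w : Fin d → ℂ) :
    a ⬝ᵥ (c • w) = c * (a ⬝ᵥ w) := by
  simp only [dotProduct, Pi.smul_apply, smul_eq_mul, Finset.mul_sum]
  exact Finset.sum_congr rfl fun i _ => by ring

lemma smul_dot' {d : ℕ} (c : ℂ) (a w : Fin d → ℂ) :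
    (c • a) ⬝ᵥ w = c * (a ⬝ᵥ w) := by
  simp only [dotProduct, Pi.smul_apply, smul_eq_mul, Finset.mul_sum]
  exact Finset.sum_congr rfl fun i _ => by ring

lemma star_smul' {d : ℕ} (c : ℂ) (a : Fin d → ℂ) :
    star (c • a) = star c • star a := by
  funext i; simp [mul_comm]

lemma conj_dot2 {d : ℕ} (M : Matrix (Fin d) (Fin d) ℂ)
    (w z : Fin d → ℂ) : star (M *ᵥ w) ⬝ᵥ z = star w ⬝ᵥ (Mᴴ *ᵥ z) := by
  rw [Matrix.star_mulVec, ← Matrix.dotProduct_mulVec]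

lemma herm_dot {d : ℕ} {M : Matrix (Fin d) (Fin d) ℂ} (hM : M.IsHermitian)
    (w z : Fin d → ℂ) : star (M *ᵥ w) ⬝ᵥ z = star w ⬝ᵥ (M *ᵥ z) := by
  rw [Matrix.star_mulVec, ← Matrix.dotProduct_mulVec, hM.eq]

lemma conj_dot {d : ℕ} (M : Matrix (Fin d) (Fin d) ℂ)
    (w z : Fin d → ℂ) : star (Mᴴ *ᵥ w) ⬝ᵥ z = star w ⬝ᵥ (M *ᵥ z) := by
  rw [Matrix.star_mulVec, ← Matrix.dotProduct_mulVec, Matrix.conjTranspose_conjTranspose]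

/-- Lagrange identity for discrete Hamiltonian nabla systems:
the weighted sum of `(y*, v^ρ*) ℓ(x,u) - ℓ(y,v)* (x; u^ρ)` telescopes to the
boundary form `(y*, v*) J (x; u)` evaluated at the endpoints. -/
theorem hamiltonian_lagrange_identity (d N : ℕ) (hN : 0 < N) (t : ℤ → ℝ)
    (ht : ∀ n : ℤ, t (n - 1) < t n)
    (A B C : ℤ → Matrix (Fin d) (Fin d) ℂ)
    (hB : ∀ n, (B n).IsHermitian) (hC : ∀ n, (C n).IsHermitian)
    (x u y v : ℤ → (Fin d → ℂ)) :
    let μρ : ℤ → ℂ := fun n => Complex.ofReal (t n - t (n - 1))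
    let nab : (ℤ → (Fin d → ℂ)) → ℤ → (Fin d → ℂ) :=
      fun g n => (μρ n)⁻¹ • (g n - g (n - 1))
    let J : Matrix (Fin d ⊕ Fin d) (Fin d ⊕ Fin d) ℂ := Matrix.fromBlocks 0 (-1) 1 0
    let H : ℤ → Matrix (Fin d ⊕ Fin d) (Fin d ⊕ Fin d) ℂ :=
      fun n => Matrix.fromBlocks (-(C n)) (A n)ᴴ (A n) (B n)
    let ell : (ℤ → (Fin d → ℂ)) → (ℤ → (Fin d → ℂ)) → ℤ → (Fin d ⊕ Fin d → ℂ) :=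
      fun g h n => J *ᵥ Sum.elim (nab g n) (nab h n) - H n *ᵥ Sum.elim (g n) (h (n - 1))
    ∑ n ∈ Finset.range N,
        ((star (Sum.elim (y (n : ℤ)) (v ((n : ℤ) - 1))) ⬝ᵥ ell x u (n : ℤ))
          - (star (ell y v (n : ℤ)) ⬝ᵥ Sum.elim (x (n : ℤ)) (u ((n : ℤ) - 1)))) * μρ (n : ℤ)
      = (star (Sum.elim (y ((N : ℤ) - 1)) (v ((N : ℤ) - 1)))
            ⬝ᵥ (J *ᵥ Sum.elim (x ((N : ℤ) - 1)) (u ((N : ℤ) - 1))))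
        - (star (Sum.elim (y (-1)) (v (-1))) ⬝ᵥ (J *ᵥ Sum.elim (x (-1)) (u (-1)))) := by
  intro μρ nab J H ell
  have hμ : ∀ n : ℤ, μρ n ≠ 0 := by
    intro n
    simp only [μρ, ne_eq, Complex.ofReal_eq_zero, sub_eq_zero]
    exact fun h => absurd h.symm (ne_of_lt (ht n))
  -- boundary form
  set F : ℤ → ℂ := fun n => star (v n) ⬝ᵥ x n - star (y n) ⬝ᵥ u n with hF
  have hbd : ∀ n : ℤ, star (Sum.elim (y n) (v n)) ⬝ᵥ (J *ᵥ Sum.elim (x n) (u n)) = F n := by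
    intro n
    simp [J, Matrix.fromBlocks_mulVec, star_sum_elim, sumElim_dotProduct_sumElim, hF,
      Matrix.neg_mulVec, sub_eq_neg_add, add_comm]
  have key : ∀ n : ℤ,
      ((star (Sum.elim (y n) (v (n - 1))) ⬝ᵥ ell x u n)
        - (star (ell y v n) ⬝ᵥ Sum.elim (x n) (u (n - 1)))) * μρ n = F n - F (n - 1) := by
    intro n
    have hnab : ∀ g : ℤ → (Fin d → ℂ), μρ n • nab g n = g n - g (n - 1) := by
      intro g
      simp only [nab, smul_smul, mul_inv_cancel₀ (hμ n), one_smul]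
    have hstar : star (μρ n) = μρ n := Complex.conj_ofReal _
    simp only [ell, J, H, Matrix.fromBlocks_mulVec, star_sum_elim,
      sumElim_dotProduct_sumElim, Matrix.zero_mulVec, Matrix.one_mulVec,
      Matrix.neg_mulVec, zero_add, add_zero,
      dotProduct_sub, sub_dotProduct, star_sub, star_add, star_neg,
      dotProduct_add, add_dotProduct, dotProduct_neg, neg_dotProduct,
      dotProduct_smul, smul_dotProduct, star_smul, star_inv₀, hstar, smul_eq_mul, Sum.elim_comp_inl, Sum.elim_comp_inr]
    simp only [nab, dot_smul', smul_dot', star_smul', star_inv₀, hstar,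
      star_sub, sub_dotProduct, dotProduct_sub]
    rw [herm_dot (hB n), herm_dot (hC n), conj_dot, conj_dot2 (A n)]
    field_simp [hμ n]
    ring

  calc ∑ n ∈ Finset.range N,
        ((star (Sum.elim (y (n : ℤ)) (v ((n : ℤ) - 1))) ⬝ᵥ ell x u (n : ℤ))
          - (star (ell y v (n : ℤ)) ⬝ᵥ Sum.elim (x (n : ℤ)) (u ((n : ℤ) - 1)))) * μρ (n : ℤ)
      = ∑ n ∈ Finset.range N, (F ((n : ℤ) + 1 - 1) - F ((n : ℤ) - 1)) := by
        refine Finset.sum_congr rfl fun n _ => ?_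
        rw [key]; ring_nf
    _ = F ((N : ℤ) - 1) - F ((0 : ℤ) - 1) := by
        have := Finset.sum_range_sub (fun k : ℕ => F ((k : ℤ) - 1)) N
        simpa [Int.add_sub_cancel] using this
    _ = _ := by rw [← hbd, ← hbd]; norm_num
end
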